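/- arXiv:2308.08860 — 7 statements merged into one kernel-verified Lean document; each statement's English description precedes it below -/
import Mathlib

section
/- Let H be a connected finite simple graph on n vertices and let k be a natural number with 1 ≤ k < n such that the girth of H is strictly greater than k. Then the maximum of e_H(S) over all k-element vertex sets S of H equals k − 1 (i.e., the Densest Subgraph value for parameter k is exactly k − 1). -/
/-!
If the girth exceeds `k`, every `k`-vertex induced subgraph is a forest and so has at most
`k - 1` edges. Conversely, a connected graph contains a connected induced subgraph on `k`
vertices (grow a vertex set one boundary edge at a time), and a connected graph on `k` vertices
has at least `k - 1` edges.
-/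

open SimpleGraph

/-- `eCount H S` is the number of edges of `H` with both endpoints in `S`. -/
noncomputable def eCount {V : Type*} (H : SimpleGraph V) (S : Finset V) : ℕ :=
  {e : H.edgeSet | ∀ v ∈ (e : Sym2 V), v ∈ S}.ncard

/-- The Densest Subgraph value: the maximum of `eCount H S` over all `k`-element vertex sets. -/
noncomputable def optDS {V : Type*} [Fintype V] (H : SimpleGraph V) (k : ℕ) : ℕ :=
  (Finset.univ.powersetCard k).sup (fun S => eCount H S)

namespace SimpleGraph

variable {V : Type*} {G : SimpleGraph V}

lemma Walk.IsCycle.length_le_card [Fintype V] {u : V} {c : G.Walk u u} (hc : c.IsCycle) :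
    c.length ≤ Fintype.card V := by
  simpa [List.length_tail] using hc.support_nodup.length_le_card

lemma isAcyclic_of_card_lt_egirth [Fintype V] (h : (Fintype.card V : ℕ∞) < G.egirth) :
    G.IsAcyclic := fun _ _ hc =>
  (h.trans_le (egirth_le_length hc)).not_ge (by exact_mod_cast hc.length_le_card)

lemma IsAcyclic.card_edgeSet_add_one_le [Finite V] [Nonempty V] (hG : G.IsAcyclic) :
    Nat.card G.edgeSet + 1 ≤ Nat.card V := by
  -- A forest extends to a spanning tree of the complete graph, which has `|V| - 1` edges.
  obtain ⟨T, hGT, -, hT⟩ := connected_top.exists_isTree_le_of_le_of_isAcyclic le_top hG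
  rw [← (isTree_iff_connected_and_card.mp hT).2]
  gcongr
  exact Nat.card_mono (Set.toFinite _) (edgeSet_mono hGT)

lemma Connected.exists_connected_induce_card [Fintype V] (hG : G.Connected) {j : ℕ}
    (hj : 1 ≤ j) (hjV : j ≤ Fintype.card V) :
    ∃ S : Finset V, S.card = j ∧ (G.induce (S : Set V)).Connected := by
  classical
  induction j, hj using Nat.le_induction with
  | base =>
    obtain ⟨v⟩ := hG.nonempty
    refine ⟨{v}, Finset.card_singleton v, ?_⟩
    rw [Finset.coe_singleton, induce_singleton_eq_top]
    exact connected_top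
  | succ j hj ih =>
    obtain ⟨S, rfl, hS⟩ := ih (by omega)
    obtain ⟨u, hu⟩ := S.card_pos.mp hj
    obtain ⟨x, hx⟩ := not_forall.mp
      fun h => S.card_lt_iff_ne_univ.mp hjV (Finset.eq_univ_iff_forall.mpr h)
    obtain ⟨d, -, hd, hd'⟩ := (hG.preconnected u x).some.exists_boundary_dart _ hu hx
    refine ⟨insert d.snd S, Finset.card_insert_of_notMem hd', ?_⟩
    rw [Finset.coe_insert, ← Set.union_singleton]
    exact connected_induce_union hS.preconnected (by simp) hd rfl d.adj

lemma image_val_edgeSet_induce (G : SimpleGraph V) (s : Set V) :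
    Sym2.map (↑) '' (G.induce s).edgeSet = {e ∈ G.edgeSet | ∀ v ∈ e, v ∈ s} := by
  ext e
  induction e using Sym2.ind
  simp only [Set.mem_image, Sym2.exists, Sym2.map_mk, Sym2.eq_iff]
  aesop (add simp adj_comm)

end SimpleGraph

section eCount

variable {V : Type*} (H : SimpleGraph V) {S : Finset V}

lemma eCount_eq_card_edgeSet_induce (S : Finset V) :
    eCount H S = Nat.card (H.induce (S : Set V)).edgeSet := by
  rw [eCount, ← Set.ncard_image_of_injective _ Subtype.val_injective,
    ← Nat.card_image_of_injective (Sym2.map.injective Subtype.val_injective),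
    image_val_edgeSet_induce, Nat.card_coe_set_eq]
  congr 1
  ext e
  simp [and_comm]

lemma eCount_add_one_le_card_of_card_lt_egirth (hS : S.Nonempty)
    (hgirth : (S.card : ℕ∞) < H.egirth) : eCount H S + 1 ≤ S.card := by
  have : Nonempty (S : Set V) := hS.to_subtype
  have hacyclic : (H.induce (S : Set V)).IsAcyclic := by
    refine isAcyclic_of_card_lt_egirth ?_
    simpa using hgirth.trans_le (Embedding.induce _).isContained.egirth_le
  simpa [eCount_eq_card_edgeSet_induce] using hacyclic.card_edgeSet_add_one_le

lemma card_le_eCount_add_one_of_connected (hS : (H.induce (S : Set V)).Connected) :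
    S.card ≤ eCount H S + 1 := by
  simpa [eCount_eq_card_edgeSet_induce] using hS.card_vert_le_card_edgeSet_add_one

end eCount

/-- If `H` is connected on `n` vertices, `1 ≤ k < n` and the girth of `H` is
strictly greater than `k`, then the Densest Subgraph value for parameter `k` is exactly
`k - 1`. -/
theorem stmt3 {V : Type*} [Fintype V] (H : SimpleGraph V) (hconn : H.Connected)
    (k : ℕ) (hk1 : 1 ≤ k) (hkn : k < Fintype.card V) (hgirth : (k : ℕ∞) < H.egirth) :
    optDS H k = k - 1 := by
  apply le_antisymm
  · refine Finset.sup_le fun S hS => ?_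
    rw [Finset.mem_powersetCard_univ] at hS
    subst hS
    have := eCount_add_one_le_card_of_card_lt_egirth H (Finset.card_pos.mp (by omega)) hgirth
    omega
  · obtain ⟨S, rfl, hS⟩ := hconn.exists_connected_induce_card hk1 hkn.le
    have hdense := card_le_eCount_add_one_of_connected H hS
    have hle : eCount H S ≤ optDS H S.card :=
      Finset.le_sup (f := eCount H) (Finset.mem_powersetCard_univ.mpr rfl)
    omega
end

section
/- Let H be a finite simple graph, let S ⊆ V_H, and let B = {z → x_v : v ∈ S} be the set of star arcs of the transformer digraph G_H corresponding to S. Then the set of vertices of G_H that are not reachable from z after removing B is exactly {x_v : v ∈ S} ∪ {y_e : e ∈ E_H, both endpoints of e lie in S}; in particular unreach(B) = |S| + e_H(S). -/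
open SimpleGraph

/-- Vertices of the transformer digraph `G_H`: `none` is the node `z`, `some (Sum.inl v)` is the
node `x_v` for a vertex `v` of `H`, and `some (Sum.inr e)` is the node `y_e` for an edge `e`
of `H`. -/
abbrev TVert {V : Type*} (H : SimpleGraph V) : Type _ := Option (V ⊕ ↥H.edgeSet)

/-- Arcs of the transformer digraph: `z → x_v` for every vertex `v`, and `x_v → y_e` whenever
`v` is an endpoint of the edge `e`. -/
def arc {V : Type*} (H : SimpleGraph V) : TVert H → TVert H → Prop
  | none, some (Sum.inl _) => True
  | some (Sum.inl v), some (Sum.inr e) => v ∈ (e : Sym2 V)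
  | _, _ => False

/-- `unreach H B` is the number of vertices of the transformer digraph that are not reachable
from `z` by a directed path using only arcs outside the blocked set `B`. -/
noncomputable def unreach {V : Type*} (H : SimpleGraph V)
    (B : Set (TVert H × TVert H)) : ℕ :=
  {w : TVert H | ¬ Relation.ReflTransGen (fun a b => arc H a b ∧ (a, b) ∉ B) none w}.ncard

/-- Blocking exactly the star arcs `z → x_v`, `v ∈ S`, leaves unreachable exactly
the nodes `x_v` (`v ∈ S`) and the nodes `y_e` for edges `e` with both endpoints in `S`;
in particular `unreach(B) = |S| + e_H(S)`. -/
theorem stmt7 {V : Type*} [Fintype V] (H : SimpleGraph V) (S : Finset V)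
    (B : Set (TVert H × TVert H))
    (hB : B = {p | ∃ v ∈ S, p = (none, some (Sum.inl v))}) :
    ({w : TVert H | ¬ Relation.ReflTransGen (fun a b => arc H a b ∧ (a, b) ∉ B) none w}
      = {w | ∃ v ∈ S, w = some (Sum.inl v)}
        ∪ {w | ∃ e : H.edgeSet, (∀ v ∈ (e : Sym2 V), v ∈ S) ∧ w = some (Sum.inr e)})
    ∧ unreach H B = S.card + eCount H S := by
  set r := fun a b => arc H a b ∧ (a, b) ∉ B with hr
  -- characterization of reachable vertices
  have hR : ∀ w : TVert H, Relation.ReflTransGen r none w ↔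
      (w = none ∨ (∃ v, v ∉ S ∧ w = some (Sum.inl v)) ∨
        (∃ e : H.edgeSet, (∃ v ∈ (e : Sym2 V), v ∉ S) ∧ w = some (Sum.inr e))) := by
    intro w
    constructor
    · intro h
      induction h with
      | refl => exact Or.inl rfl
      | tail hab hstep ih =>
        rename_i b c
        obtain ⟨harc, hnB⟩ := hstep
        rcases ih with rfl | ⟨v, hv, rfl⟩ | ⟨e, hv, rfl⟩
        · match c, harc with
          | some (Sum.inl v), _ =>
            refine Or.inr (Or.inl ⟨v, ?_, rfl⟩)
            intro hvS
            exact hnB (by simp [hB]; exact hvS)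
        · match c, harc with
          | some (Sum.inr e), harc =>
            exact Or.inr (Or.inr ⟨e, ⟨v, harc, hv⟩, rfl⟩)
        · match c, harc with
          | _, harc => exact absurd harc (by simp [arc])
    · rintro (rfl | ⟨v, hv, rfl⟩ | ⟨e, ⟨v, hve, hv⟩, rfl⟩)
      · exact Relation.ReflTransGen.refl
      · exact Relation.ReflTransGen.single ⟨trivial, by simpa [hB] using hv⟩
      · have h1 : Relation.ReflTransGen r none (some (Sum.inl v)) :=
          Relation.ReflTransGen.single ⟨trivial, by simpa [hB] using hv⟩
        exact h1.tail ⟨hve, by simp [hB]⟩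
  have hset : {w : TVert H | ¬ Relation.ReflTransGen r none w}
      = {w | ∃ v ∈ S, w = some (Sum.inl v)}
        ∪ {w | ∃ e : H.edgeSet, (∀ v ∈ (e : Sym2 V), v ∈ S) ∧ w = some (Sum.inr e)} := by
    ext w
    simp only [Set.mem_setOf_eq, Set.mem_union, hR w]
    push_neg
    constructor
    · rintro ⟨h1, h2, h3⟩
      match w with
      | none => exact absurd rfl h1
      | some (Sum.inl v) =>
        left
        refine ⟨v, ?_, rfl⟩
        by_contra hv
        exact h2 v hv rfl
      | some (Sum.inr e) =>
        right
        refine ⟨e, ?_, rfl⟩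
        intro v hv
        by_contra hvS
        exact (h3 e ⟨v, hv, hvS⟩) rfl
    · rintro (⟨v, hv, rfl⟩ | ⟨e, he, rfl⟩)
      · exact ⟨by simp, fun u hu h => hu (by injection h with h'; exact (Sum.inl.inj h') ▸ hv),
          fun e h hc => by simp at hc⟩
      · refine ⟨by simp, fun u hu h => by simp at h, ?_⟩
        rintro e' ⟨v, hve', hv⟩ h
        injection h with h'
        exact hv (he v ((Sum.inr.inj h') ▸ hve'))
  refine ⟨hset, ?_⟩
  have hA : {w : TVert H | ∃ v ∈ S, w = some (Sum.inl v)}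
      = (fun v => (some (Sum.inl v) : TVert H)) '' ↑S := by
    ext w; simp [eq_comm]
  have hBset : {w : TVert H | ∃ e : H.edgeSet, (∀ v ∈ (e : Sym2 V), v ∈ S) ∧ w = some (Sum.inr e)}
      = (fun e => (some (Sum.inr e) : TVert H)) '' {e : H.edgeSet | ∀ v ∈ (e : Sym2 V), v ∈ S} := by
    ext w; simp [eq_comm, and_comm]
  have hinj1 : Function.Injective (fun v => (some (Sum.inl v) : TVert H)) :=
    (Option.some_injective _).comp Sum.inl_injective
  have hinj2 : Function.Injective (fun e : H.edgeSet => (some (Sum.inr e) : TVert H)) :=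
    (Option.some_injective _).comp Sum.inr_injective
  have hdisj : Disjoint {w : TVert H | ∃ v ∈ S, w = some (Sum.inl v)}
      {w : TVert H | ∃ e : H.edgeSet, (∀ v ∈ (e : Sym2 V), v ∈ S) ∧ w = some (Sum.inr e)} := by
    rw [Set.disjoint_left]
    rintro w ⟨v, hv, rfl⟩ ⟨e, he, h⟩
    simp at h
  haveI : Finite (Sym2 V) := Finite.of_fintype _
  haveI : Finite ↥H.edgeSet := Subtype.finite
  haveI : Finite (TVert H) := Finite.of_equiv ((V ⊕ ↥H.edgeSet) ⊕ PUnit.{1}) (Equiv.optionEquivSumPUnit _).symm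
  unfold unreach
  rw [hset, Set.ncard_union_eq hdisj (Set.toFinite _) (Set.toFinite _), hA, hBset,
    Set.ncard_image_of_injective _ hinj1, Set.ncard_image_of_injective _ hinj2,
    Set.ncard_coe_finset]
  rfl
end

section
/- Let H be a finite simple graph and let k ≤ |V_H|. Then the maximum of unreach(B) over all k-element arc sets B of the transformer digraph G_H is at least k plus the Densest Subgraph value of H for parameter k; that is, OPT_EB(G_H, k) ≥ OPT_DS(H, k) + k. -/
open SimpleGraph

/-- The Edge Blocking optimum: the maximum of `unreach H B` over all `k`-element sets `B` of
arcs of the transformer digraph. -/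
noncomputable def optEB {V : Type*} (H : SimpleGraph V) (k : ℕ) : ℕ :=
  sSup {m | ∃ B : Finset (TVert H × TVert H),
    (∀ p ∈ B, arc H p.1 p.2) ∧ B.card = k ∧ unreach H ↑B = m}

/-!
Take a densest `k`-set `S` of `H` and block the `k` arcs `z → x_v`, `v ∈ S`. Every arc entering a
node `x_v` (`v ∈ S`) is then blocked, and every arc entering a node `y_e` with `e ⊆ S` comes from
such an `x_v`; so none of these `k + e_H(S)` nodes is reachable from `z`.
-/

theorem Relation.ReflTransGen.mem_of_mem_of_pred_closed {α : Type*} {r : α → α → Prop}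
    {C : Set α} (hC : ∀ a b, r a b → b ∈ C → a ∈ C) {a b : α}
    (h : Relation.ReflTransGen r a b) (hb : b ∈ C) : a ∈ C := by
  induction h with
  | refl => exact hb
  | tail _ hbc ih => exact ih (hC _ _ hbc hb)

namespace TVert

variable {V : Type*} (H : SimpleGraph V)

def sourceArcs [DecidableEq V] (S : Finset V) : Finset (TVert H × TVert H) :=
  S.image fun v => (none, some (Sum.inl v))

def cutOff (S : Finset V) : Set (TVert H) :=
  (fun v => some (Sum.inl v)) '' ↑S ∪
    (fun e => some (Sum.inr e)) '' {e : H.edgeSet | ∀ v ∈ (e : Sym2 V), v ∈ S}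

variable {H}

theorem arc_of_mem_sourceArcs [DecidableEq V] {S : Finset V} {p : TVert H × TVert H}
    (hp : p ∈ sourceArcs H S) : arc H p.1 p.2 := by
  obtain ⟨v, -, rfl⟩ := Finset.mem_image.1 hp
  trivial

theorem card_sourceArcs [DecidableEq V] (S : Finset V) : (sourceArcs H S).card = S.card :=
  Finset.card_image_of_injective _ fun _ _ h => by simpa using h

theorem ncard_cutOff [Finite V] (S : Finset V) : (cutOff H S).ncard = S.card + eCount H S := by
  have hdisj : Disjoint ((fun v => (some (Sum.inl v) : TVert H)) '' ↑S)
      ((fun e => some (Sum.inr e)) '' {e : H.edgeSet | ∀ v ∈ (e : Sym2 V), v ∈ S}) := by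
    rw [Set.disjoint_left]
    rintro _ ⟨v, -, rfl⟩ ⟨e, -, h⟩
    simp at h
  rw [cutOff, Set.ncard_union_eq hdisj,
    Set.ncard_image_of_injective _ (fun _ _ h => by simpa using h),
    Set.ncard_image_of_injective _ (fun _ _ h => by simpa using h), Set.ncard_coe_finset, eCount]

theorem mem_cutOff_of_arc [DecidableEq V] {S : Finset V} {a b : TVert H}
    (hab : arc H a b ∧ (a, b) ∉ (sourceArcs H S : Set _)) (hb : b ∈ cutOff H S) :
    a ∈ cutOff H S := by
  obtain ⟨harc, hblocked⟩ := hab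
  rcases hb with ⟨v, hv, rfl⟩ | ⟨e, he, rfl⟩
  · rcases a with _ | (_ | _)
    · exact absurd (Finset.mem_image_of_mem _ hv) hblocked
    all_goals exact harc.elim
  · rcases a with _ | (u | _)
    · exact harc.elim
    · exact Or.inl ⟨u, he u harc, rfl⟩
    · exact harc.elim

theorem le_unreach_sourceArcs [DecidableEq V] [Finite V] (S : Finset V) :
    S.card + eCount H S ≤ unreach H (sourceArcs H S) := by
  have hunreached : cutOff H S ⊆
      {w | ¬ Relation.ReflTransGen (fun a b => arc H a b ∧ (a, b) ∉ (sourceArcs H S : Set _))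
        none w} := by
    intro w hw hreach
    rcases hreach.mem_of_mem_of_pred_closed (fun _ _ hab hb => mem_cutOff_of_arc hab hb) hw with
      ⟨_, -, h⟩ | ⟨_, -, h⟩ <;> cases h
  rw [← ncard_cutOff]
  exact Set.ncard_le_ncard hunreached (Set.toFinite _)

end TVert

theorem unreach_le_optEB {V : Type*} [Finite V] {H : SimpleGraph V}
    {B : Finset (TVert H × TVert H)}
    (hB : ∀ p ∈ B, arc H p.1 p.2) : unreach H B ≤ optEB H B.card := by
  refine le_csSup ⟨Nat.card (TVert H), ?_⟩ ⟨B, hB, rfl, rfl⟩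
  rintro _ ⟨B', -, -, rfl⟩
  exact (Set.ncard_le_ncard (Set.subset_univ _)).trans_eq (Set.ncard_univ _)

/-- For `k ≤ |V_H|`, the maximum of `unreach(B)` over all `k`-element arc sets
`B` of the transformer digraph is at least `OPT_DS(H, k) + k`. -/
theorem stmt8 {V : Type*} [Fintype V] (H : SimpleGraph V) (k : ℕ)
    (hk : k ≤ Fintype.card V) :
    optDS H k + k ≤ optEB H k := by
  classical
  obtain ⟨S, hS, hdense⟩ := Finset.exists_mem_eq_sup (Finset.univ.powersetCard k)
    (Finset.powersetCard_nonempty.2 (by simpa using hk)) fun S => eCount H S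
  have hcard : S.card = k := (Finset.mem_powersetCard.1 hS).2
  calc optDS H k + k = S.card + eCount H S := by rw [optDS, hdense, hcard, add_comm]
    _ ≤ unreach H (TVert.sourceArcs H S) := TVert.le_unreach_sourceArcs S
    _ ≤ optEB H (TVert.sourceArcs H S).card :=
        unreach_le_optEB fun _ => TVert.arc_of_mem_sourceArcs
    _ = optEB H k := by rw [TVert.card_sourceArcs, hcard]
end

section
/- Let H be a connected finite simple graph on n vertices whose girth is finite, and let k satisfy girth(H) ≤ k ≤ n. Then there exists a set B of k arcs of the transformer digraph G_H with unreach(B) ≥ 2k. -/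
open SimpleGraph

/-!
A shortest cycle of `H` spans a set of `g = girth(H)` vertices carrying at least `g` edges.
Since `H` is connected, such a set can be grown one neighbouring vertex at a time, each step
adding at least one edge, until it has any size `k` with `g ≤ k ≤ n`. Blocking the `k` arcs
`z → x_v` from `z` into the chosen set `S` cuts off the `k` nodes `x_v` and, with them, every
node `y_e` with `e` inside `S`: at least `2k` nodes in all.
-/

namespace SimpleGraph

variable {V : Type*} {H : SimpleGraph V}

lemma Connected.exists_adj_of_mem_of_notMem (hconn : H.Connected) {S : Set V} {u v : V}
    (hu : u ∈ S) (hv : v ∉ S) : ∃ a ∈ S, ∃ b ∉ S, H.Adj a b := by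
  obtain ⟨d, -, hd₁, hd₂⟩ := (hconn u v).some.exists_boundary_dart S hu hv
  exact ⟨d.fst, hd₁, d.snd, hd₂, d.adj⟩

lemma eCount_lt_eCount_insert [Finite V] [DecidableEq V] {S : Finset V} {u v : V}
    (hu : u ∈ S) (hv : v ∉ S) (huv : H.Adj u v) : eCount H S < eCount H (insert v S) := by
  refine Set.ncard_lt_ncard
    ⟨fun e he w hw => Finset.mem_insert_of_mem (he w hw), fun hsub => ?_⟩ (Set.toFinite _)
  have huv_mem : (⟨s(u, v), huv⟩ : H.edgeSet) ∈
      {e : H.edgeSet | ∀ w ∈ (e : Sym2 V), w ∈ insert v S} := by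
    simp [hu]
  exact hv (hsub huv_mem v (Sym2.mem_mk_right u v))

lemma Walk.IsTrail.length_le_eCount [Finite V] {u v : V} {p : H.Walk u v} (hp : p.IsTrail)
    {S : Finset V} (hS : ∀ w ∈ p.support, w ∈ S) : p.length ≤ eCount H S := by
  classical
  calc p.length = p.edges.toFinset.card := by
        rw [List.toFinset_card_of_nodup hp.edges_nodup, Walk.length_edges]
    _ = (Subtype.val ⁻¹' (p.edges.toFinset : Set (Sym2 V)) : Set H.edgeSet).ncard := by
        rw [Set.ncard_preimage_of_injective_subset_range Subtype.val_injective,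
          Set.ncard_coe_finset]
        exact fun e he => ⟨⟨e, p.edges_subset_edgeSet (by simpa using he)⟩, rfl⟩
    _ ≤ eCount H S := Set.ncard_le_ncard
        (fun e he w hw => hS w (p.mem_support_of_mem_edges (by simpa using he) hw))
        (Set.toFinite _)

lemma Walk.IsCycle.exists_card_eq_le_eCount [Finite V] {u : V} {c : H.Walk u u}
    (hc : c.IsCycle) : ∃ S : Finset V, S.card = c.length ∧ c.length ≤ eCount H S := by
  classical
  refine ⟨c.support.tail.toFinset, ?_, hc.isTrail.length_le_eCount fun w hw => ?_⟩
  · rw [List.toFinset_card_of_nodup hc.support_nodup, List.length_tail, Walk.length_support,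
      Nat.add_sub_cancel]
  · rw [List.mem_toFinset]
    rcases c.mem_support_iff.1 hw with rfl | hw
    · exact Walk.end_mem_tail_support hc.not_nil
    · exact hw

lemma Connected.exists_card_eq_le_eCount_of_le [Fintype V] (hconn : H.Connected)
    (S₀ : Finset V) (hS₀ : 0 < S₀.card) (hS₀e : S₀.card ≤ eCount H S₀) {k : ℕ}
    (hk₀ : S₀.card ≤ k) (hkn : k ≤ Fintype.card V) :
    ∃ S : Finset V, S.card = k ∧ k ≤ eCount H S := by
  classical
  induction k, hk₀ using Nat.le_induction with
  | base => exact ⟨S₀, rfl, hS₀e⟩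
  | succ k hk₀ ih =>
    obtain ⟨S, hcard, hS⟩ := ih (by omega)
    obtain ⟨u, hu⟩ := Finset.card_pos.1 (by omega : 0 < S.card)
    obtain ⟨v, -, hv⟩ := Finset.exists_mem_notMem_of_card_lt_card
      (by rw [hcard, Finset.card_univ]; omega : S.card < (Finset.univ : Finset V).card)
    obtain ⟨a, ha, b, hb, hab⟩ :=
      hconn.exists_adj_of_mem_of_notMem (S := (S : Set V)) (Finset.mem_coe.2 hu) hv
    refine ⟨insert b S, by rw [Finset.card_insert_of_notMem hb, hcard], ?_⟩
    have := eCount_lt_eCount_insert ha hb hab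
    omega

lemma Connected.exists_card_eq_le_eCount_of_egirth_le [Fintype V] (hconn : H.Connected)
    {k : ℕ} (hg : H.egirth ≤ k) (hkn : k ≤ Fintype.card V) :
    ∃ S : Finset V, S.card = k ∧ k ≤ eCount H S := by
  have hcyc : ¬ H.IsAcyclic :=
    egirth_eq_top.not.1 (ne_top_of_le_ne_top (ENat.natCast_ne_top k) hg)
  obtain ⟨u, c, hc, hlen⟩ := exists_egirth_eq_length.2 hcyc
  obtain ⟨S₀, hcard, hS₀⟩ := hc.exists_card_eq_le_eCount
  have hck : c.length ≤ k := by exact_mod_cast hlen ▸ hg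
  exact hconn.exists_card_eq_le_eCount_of_le S₀ (by have := hc.three_le_length; omega)
    (hcard ▸ hS₀) (hcard ▸ hck) hkn

end SimpleGraph

section Transformer

variable {V : Type*} {H : SimpleGraph V}

lemma eq_none_of_arc_vertex {c : TVert H} {v : V} (h : arc H c (some (.inl v))) : c = none := by
  rcases c with _ | _ | _ <;> simp_all [arc]

lemma exists_eq_of_arc_edge {c : TVert H} {e : H.edgeSet} (h : arc H c (some (.inr e))) :
    ∃ v ∈ (e : Sym2 V), c = some (.inl v) := by
  rcases c with _ | v | _ <;> simp_all [arc]

variable (H) in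
def sourceArcs (S : Finset V) : Finset (TVert H × TVert H) :=
  S.map ⟨fun v => (none, some (.inl v)), fun a b h => by simpa using h⟩

lemma arc_of_mem_sourceArcs {S : Finset V} {p : TVert H × TVert H} (hp : p ∈ sourceArcs H S) :
    arc H p.1 p.2 := by
  obtain ⟨v, -, rfl⟩ := Finset.mem_map.1 hp
  trivial

lemma card_add_eCount_le_unreach [Finite V] (S : Finset V) {B : Set (TVert H × TVert H)}
    (hB : ∀ v ∈ S, ((none : TVert H), some (.inl v)) ∈ B) :
    S.card + eCount H S ≤ unreach H B := by
  set R := fun a b : TVert H => arc H a b ∧ (a, b) ∉ B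
  set E := {e : H.edgeSet | ∀ v ∈ (e : Sym2 V), v ∈ S}
  have vertex_unreachable : ∀ v ∈ S, ¬ Relation.ReflTransGen R none (some (.inl v)) := by
    intro v hv h
    rcases h.cases_tail with h | ⟨c, -, hc, hcB⟩
    · cases h
    · obtain rfl := eq_none_of_arc_vertex hc
      exact hcB (hB v hv)
  have edge_unreachable : ∀ e ∈ E, ¬ Relation.ReflTransGen R none (some (.inr e)) := by
    intro e he h
    rcases h.cases_tail with h | ⟨c, hpre, hc, -⟩
    · cases h
    · obtain ⟨v, hv, rfl⟩ := exists_eq_of_arc_edge hc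
      exact vertex_unreachable v (he v hv) hpre
  have hdisj : Disjoint ((some ∘ Sum.inl) '' (S : Set V)) ((some ∘ Sum.inr) '' E) :=
    Set.disjoint_image_image (by simp)
  calc S.card + eCount H S
        = ((some ∘ Sum.inl) '' (S : Set V) ∪ (some ∘ Sum.inr) '' E).ncard := by
        rw [Set.ncard_union_eq hdisj,
          Set.ncard_image_of_injective _ (Option.some_injective _ |>.comp Sum.inl_injective),
          Set.ncard_image_of_injective _ (Option.some_injective _ |>.comp Sum.inr_injective),
          Set.ncard_coe_finset]
        rfl
    _ ≤ unreach H B := Set.ncard_le_ncard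
        (by rintro _ (⟨v, hv, rfl⟩ | ⟨e, he, rfl⟩)
            exacts [vertex_unreachable v hv, edge_unreachable e he])
        (Set.toFinite _)

end Transformer

theorem stmt9_general {V : Type*} [Fintype V] (H : SimpleGraph V) (hconn : H.Connected)
    (k : ℕ) (hg : H.egirth ≤ (k : ℕ∞)) (hkn : k ≤ Fintype.card V) :
    ∃ B : Finset (TVert H × TVert H),
      (∀ p ∈ B, arc H p.1 p.2) ∧ B.card = k ∧ 2 * k ≤ unreach H ↑B := by
  obtain ⟨S, hcard, hS⟩ := hconn.exists_card_eq_le_eCount_of_egirth_le hg hkn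
  have hunreach : S.card + eCount H S ≤ unreach H ↑(sourceArcs H S) :=
    card_add_eCount_le_unreach S fun v hv => Finset.mem_map.2 ⟨v, hv, rfl⟩
  refine ⟨sourceArcs H S, fun _ => arc_of_mem_sourceArcs, ?_, by omega⟩
  rw [sourceArcs, Finset.card_map, hcard]

/-- If `H` is connected on `n` vertices with finite girth and
`girth(H) ≤ k ≤ n`, then some set `B` of `k` arcs of the transformer digraph has
`unreach(B) ≥ 2k`. -/
theorem stmt9 {V : Type*} [Fintype V] (H : SimpleGraph V) (hconn : H.Connected)
    (hfin : H.egirth ≠ ⊤) (k : ℕ) (hg : H.egirth ≤ (k : ℕ∞)) (hkn : k ≤ Fintype.card V) :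
    ∃ B : Finset (TVert H × TVert H),
      (∀ p ∈ B, arc H p.1 p.2) ∧ B.card = k ∧ 2 * k ≤ unreach H ↑B :=
  stmt9_general H hconn k hg hkn
end

section
/- Let H be a connected finite simple graph on n vertices whose girth is finite, and let k satisfy girth(H) ≤ k < n. Then for every set B of k arcs of the transformer digraph G_H there exists a set B' of k star arcs (i.e., B' ⊆ {z → x_v : v ∈ V_H}) such that unreach(B') ≥ unreach(B). In other words, there is an optimal k-element blocking set consisting only of arcs incident to z. -/
open SimpleGraph

lemma reach_char {V : Type*} (H : SimpleGraph V) (B : Set (TVert H × TVert H)) (w : TVert H) :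
    Relation.ReflTransGen (fun a b => arc H a b ∧ (a, b) ∉ B) none w ↔
      (w = none ∨
       (∃ v, w = some (Sum.inl v) ∧ (none, some (Sum.inl v)) ∉ B) ∨
       (∃ e : H.edgeSet, w = some (Sum.inr e) ∧ ∃ v ∈ (e : Sym2 V),
          (none, some (Sum.inl v)) ∉ B ∧ (some (Sum.inl v), some (Sum.inr e)) ∉ B)) := by
  constructor
  · intro h
    induction h with
    | refl => exact Or.inl rfl
    | tail hab hbc ih =>
      obtain ⟨harc, hnB⟩ := hbc
      rename_i b c
      rcases ih with rfl | ⟨v, rfl, hv⟩ | ⟨e, rfl, _⟩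
      · match c with
        | none => exact absurd harc (by simp [arc])
        | some (Sum.inl v) => exact Or.inr (Or.inl ⟨v, rfl, hnB⟩)
        | some (Sum.inr e) => exact absurd harc (by simp [arc])
      · match c with
        | none => exact absurd harc (by simp [arc])
        | some (Sum.inl v') => exact absurd harc (by simp [arc])
        | some (Sum.inr e) =>
          exact Or.inr (Or.inr ⟨e, rfl, v, harc, hv, hnB⟩)
      · match c with
        | none => exact absurd harc (by simp [arc])
        | some (Sum.inl v') => exact absurd harc (by simp [arc])
        | some (Sum.inr e') => exact absurd harc (by simp [arc])
  · rintro (rfl | ⟨v, rfl, hv⟩ | ⟨e, rfl, v, hve, hv1, hv2⟩)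
    · exact Relation.ReflTransGen.refl
    · exact Relation.ReflTransGen.single ⟨(by simp [arc] : arc H none (some (Sum.inl v))), hv⟩
    · exact Relation.ReflTransGen.head ⟨(by simp [arc] : arc H none (some (Sum.inl v))), hv1⟩ (Relation.ReflTransGen.single ⟨(by simpa [arc] using hve : arc H (some (Sum.inl v)) (some (Sum.inr e))), hv2⟩)

lemma unreach_formula {V : Type*} [Fintype V] (H : SimpleGraph V)
    (B : Set (TVert H × TVert H)) :
    unreach H B = {v : V | (none, some (Sum.inl v)) ∈ B}.ncard +
      {e : H.edgeSet | ∀ v ∈ (e : Sym2 V),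
        (none, some (Sum.inl v)) ∈ B ∨ (some (Sum.inl v), some (Sum.inr e)) ∈ B}.ncard := by
  have hset : {w : TVert H | ¬ Relation.ReflTransGen (fun a b => arc H a b ∧ (a, b) ∉ B) none w}
      = (fun v : V => (some (Sum.inl v) : TVert H)) '' {v : V | (none, some (Sum.inl v)) ∈ B}
        ∪ (fun e : H.edgeSet => (some (Sum.inr e) : TVert H)) ''
          {e : H.edgeSet | ∀ v ∈ (e : Sym2 V),
            (none, some (Sum.inl v)) ∈ B ∨ (some (Sum.inl v), some (Sum.inr e)) ∈ B} := by
    ext w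
    rcases w with _ | v | e
    · simp [reach_char]
    · simp [reach_char]
    · simp only [Set.mem_setOf_eq, reach_char, Set.mem_union, Set.mem_image]
      push_neg
      constructor
      · rintro ⟨-, -, h⟩
        refine Or.inr ⟨e, fun v hv => ?_, rfl⟩
        by_cases hb : (none, some (Sum.inl v)) ∈ B
        · exact Or.inl hb
        · exact Or.inr (h e rfl v hv hb)
      · rintro (⟨x, -, hx⟩ | ⟨x, hx, hxe⟩)
        · simp at hx
        · cases hxe
          refine ⟨by simp, by simp, ?_⟩
          rintro e' he' v hv hb
          cases he'
          exact (hx v hv).resolve_left hb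
  unfold unreach
  rw [hset, Set.ncard_union_eq, Set.ncard_image_of_injective, Set.ncard_image_of_injective]
  · intro a b hab; simpa using hab
  · intro a b hab; simpa using hab
  · rw [Set.disjoint_left]
    rintro x ⟨v, _, rfl⟩ ⟨e, _, h⟩
    simp at h


/-- If `H` is connected on `n` vertices with finite girth and
`girth(H) ≤ k < n`, then for every set `B` of `k` arcs of the transformer digraph there is a
set `B'` of `k` star arcs (arcs of the form `z → x_v`) with `unreach(B') ≥ unreach(B)`. -/
theorem stmt10 {V : Type*} [Fintype V] (H : SimpleGraph V) (hconn : H.Connected)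
    (hfin : H.egirth ≠ ⊤) (k : ℕ) (hg : H.egirth ≤ (k : ℕ∞)) (hkn : k < Fintype.card V)
    (B : Finset (TVert H × TVert H)) (hBarc : ∀ p ∈ B, arc H p.1 p.2)
    (hBcard : B.card = k) :
    ∃ B' : Finset (TVert H × TVert H),
      (∀ p ∈ B', ∃ v : V, p = (none, some (Sum.inl v))) ∧ B'.card = k ∧
        unreach H ↑B ≤ unreach H ↑B' := by
  classical
  haveI : Nonempty V := Fintype.card_pos_iff.mp (lt_of_le_of_lt (Nat.zero_le k) hkn)
  set f : V → TVert H × TVert H := fun v => (none, some (Sum.inl v)) with hf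
  have hfinj : Function.Injective f := by
    intro a b h
    simpa [hf] using h
  set S : Finset V := Finset.univ.filter (fun v => f v ∈ B) with hS
  set stars : Finset (TVert H × TVert H) := B.filter (fun p => p.1 = none) with hstars
  set ns : Finset (TVert H × TVert H) := B.filter (fun p => ¬ p.1 = none) with hns
  have hsplit : stars.card + ns.card = k := by
    rw [hstars, hns, Finset.card_filter_add_card_filter_not, hBcard]
  have hSimage : S.image f = stars := by
    ext p
    simp only [hS, hstars, Finset.mem_image, Finset.mem_filter, Finset.mem_univ, true_and]
    constructor
    · rintro ⟨v, hv, rfl⟩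
      exact ⟨hv, rfl⟩
    · rintro ⟨hp, h1⟩
      obtain ⟨p1, p2⟩ := p
      simp only at h1
      subst h1
      have harc := hBarc _ hp
      match p2 with
      | none => exact absurd harc (by simp [arc])
      | some (Sum.inl v) => exact ⟨v, hp, rfl⟩
      | some (Sum.inr e) => exact absurd harc (by simp [arc])
  have hScard : S.card = stars.card := by
    rw [← hSimage, Finset.card_image_of_injective _ hfinj]
  have hSk : S.card ≤ k := by omega
  obtain ⟨T, hST, -, hTcard⟩ := Finset.exists_subsuperset_card_eq S.subset_univ hSk
    (by simpa [Finset.card_univ] using hkn.le)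
  refine ⟨T.image f, ?_, ?_, ?_⟩
  · rintro p hp
    obtain ⟨v, -, rfl⟩ := Finset.mem_image.mp hp
    exact ⟨v, rfl⟩
  · rw [Finset.card_image_of_injective _ hfinj, hTcard]
  · rw [unreach_formula, unreach_formula]
    -- compute the pieces for B'
    have hA' : {v : V | ((none : TVert H), some (Sum.inl v)) ∈ (↑(T.image f) : Set (TVert H × TVert H))} = ↑T := by
      ext v
      simp only [Set.mem_setOf_eq, Finset.coe_image, Set.mem_image, Finset.mem_coe]
      constructor
      · rintro ⟨w, hw, hfw⟩
        obtain rfl : w = v := hfinj hfw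
        exact hw
      · intro hv
        exact ⟨v, hv, rfl⟩
    have hK' : {e : H.edgeSet | ∀ v ∈ (e : Sym2 V),
        ((none : TVert H), some (Sum.inl v)) ∈ (↑(T.image f) : Set (TVert H × TVert H)) ∨
        ((some (Sum.inl v) : TVert H), some (Sum.inr e)) ∈ (↑(T.image f) : Set (TVert H × TVert H))}
        = {e : H.edgeSet | ∀ v ∈ (e : Sym2 V), v ∈ T} := by
      ext e
      simp only [Set.mem_setOf_eq]
      constructor
      · intro h v hv
        rcases h v hv with h1 | h2
        · have : v ∈ ({v : V | ((none : TVert H), some (Sum.inl v)) ∈ (↑(T.image f) : Set (TVert H × TVert H))}) := h1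
          rw [hA'] at this
          exact this
        · exfalso
          simp only [Finset.coe_image, Set.mem_image, Finset.mem_coe] at h2
          obtain ⟨w, -, hw⟩ := h2
          simp [hf] at hw
      · intro h v hv
        left
        simp only [Finset.coe_image, Set.mem_image, Finset.mem_coe]
        exact ⟨v, h v hv, rfl⟩
    have hA : {v : V | ((none : TVert H), some (Sum.inl v)) ∈ (↑B : Set (TVert H × TVert H))} = ↑S := by
      ext v
      simp [hS, hf]
    rw [hA', hK', hA, Set.ncard_coe_finset, Set.ncard_coe_finset, hTcard]
    -- bound the killed-edge set for B
    set K : Set H.edgeSet := {e : H.edgeSet | ∀ v ∈ (e : Sym2 V),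
      ((none : TVert H), some (Sum.inl v)) ∈ (↑B : Set (TVert H × TVert H)) ∨
      ((some (Sum.inl v) : TVert H), some (Sum.inr e)) ∈ (↑B : Set (TVert H × TVert H))} with hK
    set K1 : Set H.edgeSet := {e : H.edgeSet | ∀ v ∈ (e : Sym2 V), v ∈ S} with hK1
    set K2 : Set H.edgeSet := {e : H.edgeSet | ∃ v ∈ (e : Sym2 V), v ∉ S ∧
      ((some (Sum.inl v) : TVert H), some (Sum.inr e)) ∈ B} with hK2
    have hKsub : K ⊆ K1 ∪ K2 := by
      intro e he
      by_cases hall : ∀ v ∈ (e : Sym2 V), v ∈ S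
      · exact Or.inl hall
      · push_neg at hall
        obtain ⟨v, hv, hvS⟩ := hall
        refine Or.inr ⟨v, hv, hvS, ?_⟩
        rcases he v hv with h1 | h2
        · exact absurd (by simpa [hS, hf] using h1) hvS
        · exact h2
    have hK2 : K2.ncard ≤ ns.card := by
      set g : H.edgeSet → TVert H × TVert H := fun e =>
        ((some (Sum.inl (Classical.epsilon (fun v => v ∈ (e : Sym2 V) ∧ v ∉ S ∧
          ((some (Sum.inl v) : TVert H), some (Sum.inr e)) ∈ B))) : TVert H),
         (some (Sum.inr e) : TVert H)) with hg
      have hmaps : ∀ e ∈ K2, g e ∈ (↑ns : Set (TVert H × TVert H)) := by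
        intro e he
        obtain ⟨v, hv, hvS, hvB⟩ := he
        have hspec := Classical.epsilon_spec (p := fun v => v ∈ (e : Sym2 V) ∧ v ∉ S ∧
          ((some (Sum.inl v) : TVert H), some (Sum.inr e)) ∈ B) ⟨v, hv, hvS, hvB⟩
        simp only [hns, Finset.coe_filter, Set.mem_setOf_eq, hg]
        exact ⟨hspec.2.2, by simp⟩
      have hinj : Set.InjOn g K2 := by
        intro e1 _ e2 _ h
        simpa [hg] using congrArg Prod.snd h
      have := Set.ncard_le_ncard_of_injOn g hmaps hinj (Set.toFinite _)
      rwa [Set.ncard_coe_finset] at this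
    have hKle : K.ncard ≤ K1.ncard + K2.ncard :=
      le_trans (Set.ncard_le_ncard hKsub (Set.toFinite _)) (Set.ncard_union_le _ _)
    have hK1T : K1.ncard ≤ ({e : H.edgeSet | ∀ v ∈ (e : Sym2 V), v ∈ T}).ncard := by
      refine Set.ncard_le_ncard ?_ (Set.toFinite _)
      intro e he v hv
      exact hST (he v hv)
    omega
end

section
/- Let H be a connected finite simple graph on n vertices whose girth is finite, and let k satisfy girth(H) ≤ k < n. Then for every set B of k arcs of the transformer digraph G_H, unreach(B) ≤ OPT_DS(H, k) + k, where OPT_DS(H, k) is the Densest Subgraph value of H for parameter k. -/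
open SimpleGraph

/-- If `H` is connected on `n` vertices with finite girth and
`girth(H) ≤ k < n`, then every set `B` of `k` arcs of the transformer digraph satisfies
`unreach(B) ≤ OPT_DS(H, k) + k`. -/
theorem stmt11 {V : Type*} [Fintype V] (H : SimpleGraph V) (hconn : H.Connected)
    (hfin : H.egirth ≠ ⊤) (k : ℕ) (hg : H.egirth ≤ (k : ℕ∞)) (hkn : k < Fintype.card V)
    (B : Finset (TVert H × TVert H)) (hBarc : ∀ p ∈ B, arc H p.1 p.2)
    (hBcard : B.card = k) :
    unreach H ↑B ≤ optDS H k + k := by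
  classical
  set Bs : Set (TVert H × TVert H) := ↑B with hBs
  set r : TVert H → TVert H → Prop := fun a b => arc H a b ∧ (a, b) ∉ Bs with hrdef
  have reach_x : ∀ v : V, Relation.ReflTransGen r none (some (Sum.inl v)) ↔
      ((none : TVert H), (some (Sum.inl v) : TVert H)) ∉ Bs := by
    intro v
    constructor
    · intro h
      rcases h.cases_tail with h | ⟨c, hc, hcv⟩
      · simp at h
      · rcases c with _ | (w | f)
        · exact hcv.2
        · exact hcv.1.elim
        · exact hcv.1.elim
    · intro h
      exact Relation.ReflTransGen.single ⟨trivial, h⟩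
  have reach_y : ∀ e : H.edgeSet, Relation.ReflTransGen r none (some (Sum.inr e)) ↔
      ∃ v, v ∈ (e : Sym2 V) ∧ ((none : TVert H), (some (Sum.inl v) : TVert H)) ∉ Bs ∧
        ((some (Sum.inl v) : TVert H), (some (Sum.inr e) : TVert H)) ∉ Bs := by
    intro e
    constructor
    · intro h
      rcases h.cases_tail with h | ⟨c, hc, hcv⟩
      · simp at h
      · rcases c with _ | (w | f)
        · exact hcv.1.elim
        · exact ⟨w, hcv.1, (reach_x w).1 hc, hcv.2⟩
        · exact hcv.1.elim
    · rintro ⟨v, hv, h1, h2⟩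
      exact Relation.ReflTransGen.head (b := some (Sum.inl v)) ⟨trivial, h1⟩
        (Relation.ReflTransGen.single ⟨hv, h2⟩)
  set S0 : Set V := {v | ((none : TVert H), (some (Sum.inl v) : TVert H)) ∈ Bs} with hS0def
  set F : Set ↥H.edgeSet := {e | ∀ v ∈ (e : Sym2 V),
      ((none : TVert H), (some (Sum.inl v) : TVert H)) ∈ Bs ∨
      ((some (Sum.inl v) : TVert H), (some (Sum.inr e) : TVert H)) ∈ Bs} with hFdef
  have hU : {w : TVert H | ¬ Relation.ReflTransGen r none w} =
      ((fun v => (some (Sum.inl v) : TVert H)) '' S0) ∪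
      ((fun e => (some (Sum.inr e) : TVert H)) '' F) := by
    ext w
    rcases w with _ | (v | e)
    · simp only [Set.mem_setOf_eq, Set.mem_union, Set.mem_image]
      constructor
      · intro h; exact absurd Relation.ReflTransGen.refl h
      · rintro (⟨_, _, h⟩ | ⟨_, _, h⟩) <;> simp at h
    · simp only [Set.mem_setOf_eq, Set.mem_union, Set.mem_image, reach_x]
      constructor
      · intro h
        left
        exact ⟨v, not_not.1 h, rfl⟩
      · rintro (⟨w, hw, h⟩ | ⟨f, hf, h⟩)
        · simp only [Option.some.injEq, Sum.inl.injEq] at h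
          subst h; exact not_not.2 hw
        · simp at h
    · simp only [Set.mem_setOf_eq, Set.mem_union, Set.mem_image, reach_y]
      constructor
      · intro h
        right
        refine ⟨e, ?_, rfl⟩
        intro v hv
        by_contra hcon
        push_neg at hcon
        exact h ⟨v, hv, hcon.1, hcon.2⟩
      · rintro (⟨w, hw, h⟩ | ⟨f, hf, h⟩)
        · simp at h
        · simp only [Option.some.injEq, Sum.inr.injEq] at h
          subst h
          rintro ⟨v, hv, h1, h2⟩
          rcases hf v hv with hc | hc
          · exact h1 hc
          · exact h2 hc
  have hunr : unreach H ↑B =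
      (((fun v => (some (Sum.inl v) : TVert H)) '' S0) ∪
      ((fun e => (some (Sum.inr e) : TVert H)) '' F)).ncard := by
    rw [unreach, ← hU]
  -- split F
  set F1 : Set ↥H.edgeSet := {e ∈ F | ∀ v ∈ (e : Sym2 V), v ∈ S0} with hF1def
  set F2 : Set ↥H.edgeSet := F \ F1 with hF2def
  have hFsplit : F = F1 ∪ F2 := by
    rw [hF2def, Set.union_diff_cancel]
    exact fun e he => he.1
  -- |S0| + |F2| ≤ k
  have hP : ∀ e ∈ F2, ∃ v, v ∈ (e : Sym2 V) ∧
      ((some (Sum.inl v) : TVert H), (some (Sum.inr e) : TVert H)) ∈ Bs := by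
    rintro e ⟨heF, heF1⟩
    have : ¬ ∀ v ∈ (e : Sym2 V), v ∈ S0 := fun h => heF1 ⟨heF, h⟩
    push_neg at this
    obtain ⟨v, hv, hvS0⟩ := this
    rcases heF v hv with hc | hc
    · exact absurd hc hvS0
    · exact ⟨v, hv, hc⟩
  set f : ↥H.edgeSet → TVert H × TVert H := fun e =>
    if h : ∃ v, v ∈ (e : Sym2 V) ∧
        ((some (Sum.inl v) : TVert H), (some (Sum.inr e) : TVert H)) ∈ Bs then
      ((some (Sum.inl h.choose) : TVert H), (some (Sum.inr e) : TVert H))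
    else ((none : TVert H), none) with hfdef
  have hfmem : ∀ e ∈ F2, f e ∈ Bs ∧ (f e).2 = (some (Sum.inr e) : TVert H) := by
    intro e he
    have h := hP e he
    rw [hfdef]
    simp only [dif_pos h]
    refine ⟨h.choose_spec.2, ?_⟩
    trivial
  set A1 : Set (TVert H × TVert H) :=
    (fun v => (((none : TVert H), (some (Sum.inl v) : TVert H)) : TVert H × TVert H)) '' S0
    with hA1def
  set A2 : Set (TVert H × TVert H) := f '' F2 with hA2def
  have hA1card : A1.ncard = S0.ncard := by
    apply Set.ncard_image_of_injective
    intro a b h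
    simpa using h
  have hA2card : A2.ncard = F2.ncard := by
    apply Set.ncard_image_of_injOn
    intro a ha b hb h
    have h2 := (hfmem a ha).2
    have h3 := (hfmem b hb).2
    rw [h] at h2
    rw [h3] at h2
    simpa using h2.symm
  have hsub : A1 ∪ A2 ⊆ Bs := by
    rintro p (⟨v, hv, rfl⟩ | ⟨e, he, rfl⟩)
    · exact hv
    · exact (hfmem e he).1
  have hdisj : Disjoint A1 A2 := by
    rw [Set.disjoint_left]
    rintro p ⟨v, hv, rfl⟩ ⟨e, he, hp⟩
    have := (hfmem e he).2
    rw [hp] at this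
    simp at this
  have hkey : S0.ncard + F2.ncard ≤ k := by
    rw [← hA1card, ← hA2card, ← Set.ncard_union_eq hdisj (Set.toFinite _) (Set.toFinite _)]
    calc (A1 ∪ A2).ncard ≤ Bs.ncard := Set.ncard_le_ncard hsub (Set.toFinite _)
    _ = k := by rw [hBs, Set.ncard_coe_finset, hBcard]
  -- S0 has small card, extend to a k-set T
  have hS0card : S0.ncard ≤ k := le_trans (Nat.le_add_right _ _) hkey
  have hS0T : ∃ T : Finset V, S0.toFinset ⊆ T ∧ T.card = k := by
    obtain ⟨T, hT1, _, hT3⟩ := Finset.exists_subsuperset_card_eq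
      (Finset.subset_univ S0.toFinset)
      (by rwa [← Set.ncard_eq_toFinset_card']) (le_of_lt hkn)
    exact ⟨T, hT1, hT3⟩
  obtain ⟨T, hTsub, hTcard⟩ := hS0T
  have hS0T' : ∀ v ∈ S0, v ∈ T := by
    intro v hv
    exact hTsub (Set.mem_toFinset.2 hv)
  have hF1le : F1.ncard ≤ optDS H k := by
    have h1 : F1 ⊆ {e : ↥H.edgeSet | ∀ v ∈ (e : Sym2 V), v ∈ T} := by
      rintro e ⟨_, he⟩ v hv
      exact hS0T' v (he v hv)
    calc F1.ncard ≤ eCount H T := Set.ncard_le_ncard h1 (Set.toFinite _)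
    _ ≤ optDS H k := Finset.le_sup (Finset.mem_powersetCard.2 ⟨Finset.subset_univ _, hTcard⟩)
  -- combine
  have hFle : F.ncard ≤ F1.ncard + F2.ncard := by
    rw [hFsplit]
    exact Set.ncard_union_le _ _
  have himg : (((fun v => (some (Sum.inl v) : TVert H)) '' S0) ∪
      ((fun e => (some (Sum.inr e) : TVert H)) '' F)).ncard = S0.ncard + F.ncard := by
    rw [Set.ncard_union_eq ?_ (Set.toFinite _) (Set.toFinite _),
      Set.ncard_image_of_injective _ (by intro a b h; simpa using h),
      Set.ncard_image_of_injective _ (by intro a b h; simpa using h)]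
    rw [Set.disjoint_left]
    rintro p ⟨v, hv, rfl⟩ ⟨e, he, hp⟩
    simp at hp
  rw [hunr, himg]
  calc S0.ncard + F.ncard ≤ S0.ncard + (F1.ncard + F2.ncard) := by omega
  _ = F1.ncard + (S0.ncard + F2.ncard) := by ring
  _ ≤ optDS H k + k := Nat.add_le_add hF1le hkey
end

section
/- Let H be a connected finite simple graph on n vertices whose girth is finite, and let k satisfy girth(H) ≤ k < n. Then the maximum of unreach(B) over all k-element arc sets B of the transformer digraph G_H equals OPT_DS(H, k) + k; that is, OPT_DS(H, k) = OPT_EB(G_H, k) − k. -/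
open SimpleGraph

/-!
Blocking `z → x_v` cuts off `x_v` and nothing else among the `x`'s, and `y_e` is cut off exactly
when every endpoint `v` of `e` has `x_v` cut off or its arc `x_v → y_e` blocked. Hence blocking
`z → x_v` for `v ∈ S`, `|S| = k`, cuts off `k + e_H(S)` vertices. Conversely, let `S` be the set
of vertices whose arc from `z` is among `k` blocked arcs. A cut-off `y_e` with `e ⊄ S` is the head
of a blocked arc not leaving `z`, and distinct such `e` use distinct arcs, so at most
`|S| + e_H(S) + (k - |S|) ≤ k + OPT_DS(H, k)` vertices are cut off; here `k ≤ n` lets `S` be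
enlarged to `k` vertices.
-/

lemma ncard_image_some_inl_union_inr {α β : Type*} {A : Set α} {C : Set β}
    (hA : A.Finite) (hC : C.Finite) :
    (some '' (Sum.inl '' A ∪ Sum.inr '' C) : Set (Option (α ⊕ β))).ncard =
      A.ncard + C.ncard := by
  rw [Set.ncard_image_of_injective _ (Option.some_injective _),
    Set.ncard_union_eq Set.disjoint_image_inl_image_inr (hA.image _) (hC.image _),
    Set.ncard_image_of_injective _ Sum.inl_injective,
    Set.ncard_image_of_injective _ Sum.inr_injective]

section Transformer

variable {V : Type*} {H : SimpleGraph V}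

lemma arc_inl_iff {a : TVert H} {v : V} : arc H a (some (.inl v)) ↔ a = none := by
  rcases a with _ | (_ | _) <;> simp [arc]

lemma arc_inr_iff {a : TVert H} {e : H.edgeSet} :
    arc H a (some (.inr e)) ↔ ∃ v ∈ (e : Sym2 V), a = some (.inl v) := by
  rcases a with _ | (_ | _) <;> simp [arc]

variable (H) in
def edgesWithin (A : Set V) : Set H.edgeSet :=
  {e | ∀ v ∈ (e : Sym2 V), v ∈ A}

variable (H) in
def Reaches (B : Set (TVert H × TVert H)) : TVert H → Prop :=
  Relation.ReflTransGen (fun a b => arc H a b ∧ (a, b) ∉ B) none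

def blockedVerts (B : Set (TVert H × TVert H)) : Set V :=
  {v | (none, some (.inl v)) ∈ B}

def cutEdges (B : Set (TVert H × TVert H)) : Set H.edgeSet :=
  {e | ∀ v ∈ (e : Sym2 V), v ∈ blockedVerts B ∨ (some (.inl v), some (.inr e)) ∈ B}

def headEdges (B : Set (TVert H × TVert H)) : Set H.edgeSet :=
  {e | ∃ p ∈ B, p.2 = some (.inr e)}

variable (B : Set (TVert H × TVert H))

lemma reaches_none : Reaches H B none := .refl

lemma reaches_some_iff (x : V ⊕ H.edgeSet) :
    Reaches H B (some x) ↔ ∃ a, Reaches H B a ∧ arc H a (some x) ∧ (a, some x) ∉ B := by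
  rw [Reaches, Relation.ReflTransGen.cases_tail_iff]
  simp

lemma reaches_inl_iff (v : V) : Reaches H B (some (.inl v)) ↔ v ∉ blockedVerts B := by
  rw [reaches_some_iff]
  simp [arc_inl_iff, blockedVerts, reaches_none]

lemma reaches_inr_iff (e : H.edgeSet) : Reaches H B (some (.inr e)) ↔ e ∉ cutEdges B := by
  rw [reaches_some_iff]
  simp [arc_inr_iff, reaches_inl_iff, cutEdges]
  grind

lemma setOf_not_reaches :
    {w | ¬ Reaches H B w} = some '' (Sum.inl '' blockedVerts B ∪ Sum.inr '' cutEdges B) := by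
  ext (_ | v | e)
  · simp [reaches_none]
  · simp [reaches_inl_iff]
  · rw [Set.mem_ofPred_eq, reaches_inr_iff, not_not, (Option.some_injective _).mem_set_image,
      Set.mem_union, Sum.inr_injective.mem_set_image]
    simp

lemma unreach_eq [Finite V] :
    unreach H B = (blockedVerts B).ncard + (cutEdges B).ncard := by
  rw [unreach, ← Reaches, setOf_not_reaches,
    ncard_image_some_inl_union_inr (Set.toFinite _) (Set.toFinite _)]

lemma ncard_blockedVerts_add_ncard_headEdges_le [Finite V] :
    (blockedVerts B).ncard + (headEdges B).ncard ≤ B.ncard := by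
  rw [← ncard_image_some_inl_union_inr (Set.toFinite _) (Set.toFinite _)]
  calc _ ≤ (Prod.snd '' B).ncard := Set.ncard_le_ncard ?_ (Set.toFinite _)
    _ ≤ B.ncard := Set.ncard_image_le (Set.toFinite _)
  rintro _ ⟨_, ⟨v, hv, rfl⟩ | ⟨e, ⟨p, hp, he⟩, rfl⟩, rfl⟩
  · exact ⟨_, hv, rfl⟩
  · exact ⟨p, hp, he⟩

lemma cutEdges_subset :
    cutEdges B ⊆ edgesWithin H (blockedVerts B) ∪ headEdges B := by
  intro e he
  refine or_iff_not_imp_left.2 fun hout => ?_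
  obtain ⟨v, hve, hv⟩ : ∃ v ∈ (e : Sym2 V), v ∉ blockedVerts B := by
    simpa [edgesWithin] using hout
  exact ⟨_, (he v hve).resolve_left hv, rfl⟩

lemma unreach_le_ncard_add [Finite V] :
    unreach H B ≤ B.ncard + (edgesWithin H (blockedVerts B)).ncard := by
  calc unreach H B = (blockedVerts B).ncard + (cutEdges B).ncard := unreach_eq B
    _ ≤ (blockedVerts B).ncard + ((edgesWithin H (blockedVerts B)).ncard
          + (headEdges B).ncard) := by
      grw [Set.ncard_le_ncard (cutEdges_subset B) (Set.toFinite _), Set.ncard_union_le]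
    _ ≤ _ := by have := ncard_blockedVerts_add_ncard_headEdges_le B; omega

variable (H) in
def vertexBlock (S : Finset V) : Finset (TVert H × TVert H) :=
  S.map ⟨fun v => (none, some (.inl v)), fun _ _ h => by simpa using h⟩

variable (S : Finset V)

lemma mem_vertexBlock {p : TVert H × TVert H} :
    p ∈ vertexBlock H S ↔ ∃ v ∈ S, (none, some (.inl v)) = p :=
  Finset.mem_map

lemma card_vertexBlock : (vertexBlock H S).card = S.card := Finset.card_map _

lemma arc_of_mem_vertexBlock {p : TVert H × TVert H} (hp : p ∈ vertexBlock H S) :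
    arc H p.1 p.2 := by
  obtain ⟨v, -, rfl⟩ := (mem_vertexBlock S).1 hp
  trivial

lemma blockedVerts_vertexBlock :
    blockedVerts (vertexBlock H S : Set (TVert H × TVert H)) = S := by
  ext v
  simp [blockedVerts, mem_vertexBlock]

lemma cutEdges_vertexBlock :
    cutEdges (vertexBlock H S : Set (TVert H × TVert H)) = edgesWithin H S := by
  ext e
  rw [cutEdges, blockedVerts_vertexBlock]
  simp [edgesWithin, mem_vertexBlock]

lemma unreach_vertexBlock [Finite V] :
    unreach H (vertexBlock H S) = S.card + eCount H S := by
  rw [unreach_eq, blockedVerts_vertexBlock, cutEdges_vertexBlock, Set.ncard_coe_finset]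
  rfl

end Transformer

section Densest

variable {V : Type*} [Fintype V] (H : SimpleGraph V)

lemma eCount_le_optDS (S : Finset V) : eCount H S ≤ optDS H S.card :=
  Finset.le_sup (Finset.mem_powersetCard_univ.2 rfl)

lemma exists_card_eq_eCount_eq_optDS {k : ℕ} (hk : k ≤ Fintype.card V) :
    ∃ S : Finset V, S.card = k ∧ eCount H S = optDS H k := by
  obtain ⟨S, hS, hmax⟩ := Finset.exists_mem_eq_sup (Finset.univ.powersetCard k)
    (Finset.powersetCard_nonempty.2 (by simpa using hk)) (eCount H)
  exact ⟨S, Finset.mem_powersetCard_univ.1 hS, hmax.symm⟩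

lemma ncard_edgesWithin_le_optDS {A : Set V} {k : ℕ} (hA : A.ncard ≤ k)
    (hk : k ≤ Fintype.card V) : (edgesWithin H A).ncard ≤ optDS H k := by
  classical
  obtain ⟨T, hAT, -, rfl⟩ := Finset.exists_subsuperset_card_eq (n := k)
    (Finset.subset_univ A.toFinset) (by rwa [← Set.ncard_eq_toFinset_card']) (by simpa using hk)
  calc (edgesWithin H A).ncard ≤ eCount H T :=
        Set.ncard_le_ncard (fun e he v hv => hAT (by simpa using he v hv)) (Set.toFinite _)
    _ ≤ optDS H T.card := eCount_le_optDS H T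

theorem unreach_le_optDS_add (B : Finset (TVert H × TVert H)) (hB : B.card ≤ Fintype.card V) :
    unreach H B ≤ optDS H B.card + B.card := by
  have hblocked := ncard_blockedVerts_add_ncard_headEdges_le (B : Set (TVert H × TVert H))
  rw [Set.ncard_coe_finset] at hblocked
  calc unreach H B
        ≤ B.card + (edgesWithin H (blockedVerts (B : Set (TVert H × TVert H)))).ncard := by
        simpa using unreach_le_ncard_add (B : Set (TVert H × TVert H))
    _ ≤ optDS H B.card + B.card := by
      grw [ncard_edgesWithin_le_optDS H (by omega) hB]
      omega

theorem isGreatest_unreach {k : ℕ} (hk : k ≤ Fintype.card V) :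
    IsGreatest {m | ∃ B : Finset (TVert H × TVert H),
      (∀ p ∈ B, arc H p.1 p.2) ∧ B.card = k ∧ unreach H ↑B = m} (optDS H k + k) := by
  obtain ⟨S, rfl, hS⟩ := exists_card_eq_eCount_eq_optDS H hk
  refine ⟨⟨vertexBlock H S, fun p => arc_of_mem_vertexBlock S, card_vertexBlock S, ?_⟩, ?_⟩
  · rw [unreach_vertexBlock, hS, add_comm]
  · rintro m ⟨B, -, hB, rfl⟩
    simpa [hB] using unreach_le_optDS_add H B (hB ▸ hk)

theorem optEB_eq_optDS_add {k : ℕ} (hk : k ≤ Fintype.card V) : optEB H k = optDS H k + k :=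
  (isGreatest_unreach H hk).csSup_eq

end Densest

theorem stmt12_general {V : Type*} [Fintype V] (H : SimpleGraph V)
    (k : ℕ) (hkn : k < Fintype.card V) :
    optEB H k = optDS H k + k ∧ optDS H k = optEB H k - k := by
  have h := optEB_eq_optDS_add H hkn.le
  exact ⟨h, by omega⟩

/-- If `H` is connected on `n` vertices with finite girth and
`girth(H) ≤ k < n`, then the maximum of `unreach(B)` over all `k`-element arc sets `B` of the
transformer digraph equals `OPT_DS(H, k) + k`; that is, `OPT_DS(H, k) = OPT_EB(G_H, k) - k`. -/
theorem stmt12 {V : Type*} [Fintype V] (H : SimpleGraph V) (hconn : H.Connected)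
    (hfin : H.egirth ≠ ⊤) (k : ℕ) (hg : H.egirth ≤ (k : ℕ∞)) (hkn : k < Fintype.card V) :
    optEB H k = optDS H k + k ∧ optDS H k = optEB H k - k :=
  stmt12_general H k hkn
end
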